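/- arXiv:1207.6670 — 2 statements merged into one kernel-verified Lean document; each statement's English description precedes it below -/
import Mathlib

section
/- Let 1 < p < ∞, T > 0, q ∈ C([0,T]; [0,∞)) with q ≢ 0, and m ∈ C([0,T]) a sign-changing weight. Define λ₀⁺ = inf { ∫₀ᵀ (|u'|^p + q|u|^p) dx : u ∈ W_T^{1,p}(0,T), ∫₀ᵀ m |u|^p dx = 1 }, where W_T^{1,p}(0,T) = {u ∈ W^{1,p}(0,T) : u(0) = u(T)}. Then λ₀⁺ > 0. -/
/-!
Let `M ≥ |m|` on `[0, T]` and choose `r > 0` with `M r^p T = 1`; the constraint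
`∫ m |u|^p = 1` then forces `sup |u| ≥ r`. Fix an interval `[a, b]` on which `q ≥ δ > 0`.
If the energy `E` of `u` is small, the term `∫ q |u|^p ≥ δ (b - a) min_{[a,b]} |u|^p` makes
`|u| < r/4` somewhere on `[a, b]`, and the pointwise bound `t ≤ ε + t^p / ε^(p-1)` with
`ε = r / (4T)` gives `∫ |u'| ≤ r/4 + E / ε^(p-1) < r/2`. Hence `|u| ≤ 3r/4` everywhere,
a contradiction; so `E` is bounded below by a positive constant independent of `u`.
-/

open Set intervalIntegral MeasureTheory

lemma le_add_rpow_div_rpow {t ε p : ℝ} (ht : 0 ≤ t) (hε : 0 < ε) (hp : 1 ≤ p) :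
    t ≤ ε + t ^ p / ε ^ (p - 1) := by
  rcases le_or_gt t ε with htε | hεt
  · have : 0 ≤ t ^ p / ε ^ (p - 1) := by positivity
    linarith
  · have key : t * ε ^ (p - 1) ≤ t ^ p := calc
      t * ε ^ (p - 1) ≤ t * t ^ (p - 1) := by gcongr
      _ = t ^ p := by rw [← Real.rpow_one_add' ht (by linarith), add_sub_cancel]
    have : t ≤ t ^ p / ε ^ (p - 1) := (le_div_iff₀ (by positivity)).mpr key
    linarith

lemma integral_abs_le_mul_add_integral_rpow_div {f : ℝ → ℝ} {a b ε p : ℝ} (hab : a ≤ b)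
    (hf : Continuous f) (hε : 0 < ε) (hp : 1 ≤ p) :
    ∫ x in a..b, |f x| ≤ ε * (b - a) + (∫ x in a..b, |f x| ^ p) / ε ^ (p - 1) := by
  have hfp : Continuous fun x ↦ |f x| ^ p := hf.abs.rpow_const fun _ ↦ Or.inr (by linarith)
  calc ∫ x in a..b, |f x|
      ≤ ∫ x in a..b, (ε + |f x| ^ p / ε ^ (p - 1)) :=
        integral_mono_on hab (hf.abs.intervalIntegrable a b)
          (intervalIntegrable_const.add ((hfp.div_const _).intervalIntegrable a b))
          fun x _ ↦ le_add_rpow_div_rpow (abs_nonneg _) hε hp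
    _ = ε * (b - a) + (∫ x in a..b, |f x| ^ p) / ε ^ (p - 1) := by
        rw [integral_add intervalIntegrable_const ((hfp.div_const _).intervalIntegrable a b),
          intervalIntegral.integral_const, intervalIntegral.integral_div, smul_eq_mul, mul_comm]

lemma abs_le_abs_add_integral_abs_deriv {u : ℝ → ℝ} (hu : ContDiff ℝ 1 u) {a b s t : ℝ}
    (hab : a ≤ b) (hs : s ∈ Icc a b) (ht : t ∈ Icc a b) :
    |u t| ≤ |u s| + ∫ x in a..b, |deriv u x| := by
  have hu' : Continuous (deriv u) := hu.continuous_deriv le_rfl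
  have hftc : ∫ x in s..t, deriv u x = u t - u s :=
    integral_deriv_eq_sub (fun x _ ↦ (hu.differentiable one_ne_zero).differentiableAt)
      (hu'.intervalIntegrable s t)
  have hsub : uIoc s t ⊆ uIoc a b :=
    uIoc_subset_uIoc_of_uIcc_subset_uIcc (uIcc_subset_Icc hs ht |>.trans Icc_subset_uIcc)
  have hosc : |u t - u s| ≤ ∫ x in a..b, |deriv u x| := calc
    |u t - u s| = |∫ x in s..t, deriv u x| := by rw [hftc]
    _ ≤ |(∫ x in s..t, |deriv u x|)| := by
        simpa only [Real.norm_eq_abs] using norm_integral_le_abs_integral_norm (f := deriv u) (μ := volume) (a := s) (b := t)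
    _ ≤ |(∫ x in a..b, |deriv u x|)| :=
        abs_integral_mono_interval hsub (Filter.Eventually.of_forall fun _ ↦ abs_nonneg _)
          (hu'.abs.intervalIntegrable a b)
    _ = ∫ x in a..b, |deriv u x| := abs_of_nonneg (integral_nonneg hab fun _ _ ↦ abs_nonneg _)
  linarith [abs_sub_abs_le_abs_sub (u t) (u s)]

lemma integral_mul_abs_rpow_le {m u : ℝ → ℝ} {a b p M N : ℝ} (hab : a ≤ b) (hp : 0 ≤ p)
    (hm : ∀ x ∈ Icc a b, |m x| ≤ M) (hu : ∀ x ∈ Icc a b, |u x| ≤ N) :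
    ∫ x in a..b, m x * |u x| ^ p ≤ M * N ^ p * (b - a) := by
  have hbound : ∀ x ∈ uIoc a b, ‖m x * |u x| ^ p‖ ≤ M * N ^ p := by
    intro x hx
    rw [uIoc_of_le hab] at hx
    have hx : x ∈ Icc a b := Ioc_subset_Icc_self hx
    rw [Real.norm_eq_abs, abs_mul, abs_of_nonneg (Real.rpow_nonneg (abs_nonneg (u x)) p)]
    exact mul_le_mul (hm x hx) (Real.rpow_le_rpow (abs_nonneg _) (hu x hx) hp) (by positivity)
      ((abs_nonneg _).trans (hm x hx))
  calc ∫ x in a..b, m x * |u x| ^ p ≤ ‖∫ x in a..b, m x * |u x| ^ p‖ := Real.le_norm_self _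
    _ ≤ M * N ^ p * |b - a| := norm_integral_le_of_norm_le_const hbound
    _ = M * N ^ p * (b - a) := by rw [abs_of_nonneg (sub_nonneg.mpr hab)]

lemma exists_Icc_forall_lt_of_lt {q : ℝ → ℝ} {s t x₀ k : ℝ} (hst : s < t)
    (hq : ContinuousOn q (Icc s t)) (hx₀ : x₀ ∈ Icc s t) (hk : k < q x₀) :
    ∃ a b, s ≤ a ∧ a < b ∧ b ≤ t ∧ ∀ x ∈ Icc a b, k < q x := by
  obtain ⟨ε, hε, hball⟩ := Metric.mem_nhdsWithin_iff.mp (hq x₀ hx₀ (Ioi_mem_nhds hk))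
  refine ⟨max s (x₀ - ε / 2), min t (x₀ + ε / 2), le_max_left _ _, ?_, min_le_left _ _, ?_⟩
  · simp only [max_lt_iff, lt_min_iff]
    exact ⟨⟨hst, by linarith [hx₀.2]⟩, by linarith [hx₀.1], by linarith⟩
  · rintro x ⟨hax, hxb⟩
    rw [max_le_iff] at hax
    rw [le_min_iff] at hxb
    refine hball ⟨?_, hax.1, hxb.1⟩
    rw [Metric.mem_ball, Real.dist_eq, abs_sub_lt_iff]
    constructor <;> linarith

lemma min_le_integral_abs_deriv_rpow_add {u m q : ℝ → ℝ} {T p M r a b δ : ℝ} (hT : 0 < T)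
    (hp : 1 ≤ p) (hu : ContDiff ℝ 1 u) (hmu : ∫ x in (0:ℝ)..T, m x * |u x| ^ p = 1)
    (hmM : ∀ x ∈ Icc 0 T, |m x| ≤ M) (hr : 0 < r) (hMr : M * r ^ p * T = 1)
    (hq : ContinuousOn q (Icc 0 T)) (hq0 : ∀ x ∈ Icc 0 T, 0 ≤ q x)
    (ha : 0 ≤ a) (hab : a ≤ b) (hbT : b ≤ T) (hqδ : ∀ x ∈ Icc a b, δ ≤ q x) :
    min (δ * (b - a) * (r / 4) ^ p) ((r / (4 * T)) ^ (p - 1) * (r / 4)) ≤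
      ∫ x in (0:ℝ)..T, (|deriv u x| ^ p + q x * |u x| ^ p) := by
  have hp0 : 0 < p := by linarith
  have hu' : Continuous (deriv u) := hu.continuous_deriv le_rfl
  have hu'p : Continuous fun x ↦ |deriv u x| ^ p :=
    hu'.abs.rpow_const fun _ ↦ Or.inr hp0.le
  have hqu : ContinuousOn (fun x ↦ q x * |u x| ^ p) (Icc 0 T) :=
    hq.mul (hu.continuous.abs.rpow_const fun _ ↦ Or.inr hp0.le).continuousOn
  have hqu0 : ∀ x ∈ Icc 0 T, 0 ≤ q x * |u x| ^ p := fun x hx ↦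
    mul_nonneg (hq0 x hx) (by positivity)
  have habT : Icc a b ⊆ Icc 0 T := Icc_subset_Icc ha hbT
  rw [integral_add (hu'p.intervalIntegrable 0 T) (hqu.intervalIntegrable_of_Icc hT.le)]
  set I₁ := ∫ x in (0:ℝ)..T, |deriv u x| ^ p
  set I₂ := ∫ x in (0:ℝ)..T, q x * |u x| ^ p
  have hI₁ : 0 ≤ I₁ := integral_nonneg hT.le fun _ _ ↦ by positivity
  have hI₂ : 0 ≤ I₂ := integral_nonneg hT.le hqu0
  by_contra! hlt
  rw [lt_min_iff] at hlt
  obtain ⟨y, hy, hyr⟩ : ∃ y ∈ Icc a b, |u y| < r / 4 := by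
    by_contra! hge
    have : δ * (b - a) * (r / 4) ^ p ≤ I₂ := calc
      δ * (b - a) * (r / 4) ^ p = ∫ x in a..b, δ * (r / 4) ^ p := by
        rw [intervalIntegral.integral_const, smul_eq_mul]; ring
      _ ≤ ∫ x in a..b, q x * |u x| ^ p :=
        integral_mono_on hab intervalIntegrable_const
          ((hqu.mono habT).intervalIntegrable_of_Icc hab) fun x hx ↦
          mul_le_mul (hqδ x hx) (Real.rpow_le_rpow (by positivity) (hge x hx) hp0.le)
            (by positivity) (hq0 x (habT hx))
      _ ≤ I₂ := integral_mono_interval ha hab hbT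
        (ae_restrict_of_forall_mem measurableSet_Ioc fun x hx ↦ hqu0 x (Ioc_subset_Icc_self hx))
        (hqu.intervalIntegrable_of_Icc hT.le)
    linarith [hlt.1]
  have hJ : ∫ x in (0:ℝ)..T, |deriv u x| < r / 2 := by
    have hε : 0 < r / (4 * T) := by positivity
    have hJle := integral_abs_le_mul_add_integral_rpow_div hT.le hu' hε hp
    have hεT : r / (4 * T) * (T - 0) = r / 4 := by rw [sub_zero]; field_simp
    have : I₁ / (r / (4 * T)) ^ (p - 1) < r / 4 :=
      (div_lt_iff₀ (by positivity)).mpr (by linarith [hlt.2])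
    linarith
  have hsup : ∀ x ∈ Icc 0 T, |u x| ≤ 3 * r / 4 := fun x hx ↦ by
    linarith [abs_le_abs_add_integral_abs_deriv hu hT.le (habT hy) hx]
  have hconstraint := integral_mul_abs_rpow_le hT.le hp0.le hmM hsup
  rw [hmu, sub_zero] at hconstraint
  have hMT : 0 < M * T := by
    have : 0 < r ^ p := by positivity
    nlinarith
  have : (3 * r / 4) ^ p < r ^ p := Real.rpow_lt_rpow (by positivity) (by linarith) hp0
  nlinarith

theorem principal_eigenvalue_positive_general
    (T p : ℝ) (hT : 0 < T) (hp : 1 < p)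
    (q : ℝ → ℝ) (hq : ContinuousOn q (Icc 0 T)) (hq0 : ∀ x ∈ Icc 0 T, 0 ≤ q x)
    (hqne : ∃ x ∈ Icc 0 T, q x ≠ 0)
    (m : ℝ → ℝ) (hm : ContinuousOn m (Icc 0 T))
    (S : Set ℝ)
    (hS : S = { y : ℝ | ∃ u : ℝ → ℝ, ContDiff ℝ 1 u ∧ u 0 = u T ∧
        (∫ x in (0:ℝ)..T, m x * |u x| ^ p) = 1 ∧
        y = ∫ x in (0:ℝ)..T, (|deriv u x| ^ p + q x * |u x| ^ p) })
    (hne : S.Nonempty) :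
    0 < sInf S := by
  subst hS
  obtain ⟨C, hC⟩ := isCompact_Icc.exists_bound_of_continuousOn hm
  have hmM : ∀ x ∈ Icc 0 T, |m x| ≤ max C 1 := fun x hx ↦ (hC x hx).trans (le_max_left _ _)
  have hM : 0 < max C 1 := one_pos.trans_le (le_max_right _ _)
  obtain ⟨x₀, hx₀, hqx₀_ne⟩ := hqne
  have hqx₀ : 0 < q x₀ := (hq0 x₀ hx₀).lt_of_ne hqx₀_ne.symm
  obtain ⟨a, b, ha, hab, hbT, hqδ⟩ := exists_Icc_forall_lt_of_lt hT hq hx₀ (half_lt_self hqx₀)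
  set r := (max C 1 * T)⁻¹ ^ p⁻¹
  have hr : 0 < r := by positivity
  have hMr : max C 1 * r ^ p * T = 1 := by
    rw [Real.rpow_inv_rpow (by positivity) (by linarith)]
    field_simp
  have hc : 0 < min (q x₀ / 2 * (b - a) * (r / 4) ^ p) ((r / (4 * T)) ^ (p - 1) * (r / 4)) := by
    have : 0 < b - a := sub_pos.mpr hab
    apply lt_min <;> positivity
  refine hc.trans_le (le_csInf hne ?_)
  rintro _ ⟨u, hu, -, hmu, rfl⟩
  exact min_le_integral_abs_deriv_rpow_add hT hp.le hu hmu hmM hr hMr hq hq0 ha hab.le hbT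
    fun x hx ↦ (hqδ x hx).le

theorem principal_eigenvalue_positive
    (T p : ℝ) (hT : 0 < T) (hp : 1 < p)
    (q : ℝ → ℝ) (hq : ContinuousOn q (Icc 0 T)) (hq0 : ∀ x ∈ Icc 0 T, 0 ≤ q x)
    (hqne : ∃ x ∈ Icc 0 T, q x ≠ 0)
    (m : ℝ → ℝ) (hm : ContinuousOn m (Icc 0 T))
    (hsign : (∃ x ∈ Icc 0 T, 0 < m x) ∧ ∃ x ∈ Icc 0 T, m x < 0)
    (S : Set ℝ)
    (hS : S = { y : ℝ | ∃ u : ℝ → ℝ, ContDiff ℝ 1 u ∧ u 0 = u T ∧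
        (∫ x in (0:ℝ)..T, m x * |u x| ^ p) = 1 ∧
        y = ∫ x in (0:ℝ)..T, (|deriv u x| ^ p + q x * |u x| ^ p) })
    (hne : S.Nonempty) :
    0 < sInf S :=
  principal_eigenvalue_positive_general T p hT hp q hq hq0 hqne m hm S hS hne
end

section
/- Let 1 < p < ∞ and suppose u ∈ C¹[0,T] with φ_p(u') ∈ C¹[0,T] satisfies -(φ_p(u'))' + q φ_p(u) = λ m φ_p(u) + g(x, u, λ) on (0,T), where g satisfies |g(x,s,λ)| ≤ C(λ, ‖u‖_∞) |s|^{p-1} for all s with |s| ≤ ‖u‖_∞. If u has a double zero x* ∈ [0,T] (i.e. u(x*) = u'(x*) = 0), then u ≡ 0 on [0,T]. -/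
/-!
Write `φ_r(s) = |s|^(r-2) s` (`signedRpow r s`), `φ = φ_p(u')` and `p'` for the conjugate
exponent of `p`. The energy `E = |u|^p + |φ|^p' = |u|^p + |u'|^p` has derivative
`E' = p φ_p(u) u' + p' φ_p'(φ) φ'` on `(0, T)`. The equation gives `|φ'| ≤ K |u|^(p-1)`,
and since `|φ_p'(φ)| = |u'|`, Young's inequality yields `|E'| ≤ const · E`. By Grönwall, `E`
vanishes on `[0, T]` once it vanishes at the double zero `x₀`.
-/

open Set Real Filter Topology

noncomputable def signedRpow (r s : ℝ) : ℝ := |s| ^ (r - 2) * s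

theorem abs_signedRpow {r : ℝ} (hr : r ≠ 1) (s : ℝ) : |signedRpow r s| = |s| ^ (r - 1) := by
  rcases eq_or_ne s 0 with rfl | hs
  · simp [signedRpow, zero_rpow (sub_ne_zero.2 hr)]
  · rw [signedRpow, abs_mul, abs_rpow_of_nonneg (abs_nonneg s), abs_abs,
      ← rpow_add_one (abs_ne_zero.2 hs)]
    ring_nf

theorem abs_signedRpow_rpow_conj {p q : ℝ} (hpq : p.HolderConjugate q) (s : ℝ) :
    |signedRpow p s| ^ q = |s| ^ p := by
  rw [abs_signedRpow hpq.lt.ne', ← rpow_mul (abs_nonneg s), hpq.sub_one_mul_conj]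

theorem abs_signedRpow_signedRpow_conj {p q : ℝ} (hpq : p.HolderConjugate q) (s : ℝ) :
    |signedRpow q (signedRpow p s)| = |s| := by
  rw [abs_signedRpow hpq.symm.lt.ne', abs_signedRpow hpq.lt.ne', ← rpow_mul (abs_nonneg s),
    show (p - 1) * (q - 1) = 1 by linear_combination hpq.mul_eq_add, rpow_one]

theorem rpow_sub_one_mul_le_rpow_add_rpow {r a b : ℝ} (hr : 1 < r) (ha : 0 ≤ a) (hb : 0 ≤ b) :
    a ^ (r - 1) * b ≤ a ^ r + b ^ r := by
  have hab : 0 ≤ max a b := ha.trans (le_max_left a b)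
  calc a ^ (r - 1) * b ≤ max a b ^ (r - 1) * max a b := by
        gcongr
        exacts [le_max_left a b, le_max_right a b]
    _ = max a b ^ r := by
        rw [← rpow_add_one' hab (by linarith), sub_add_cancel]
    _ ≤ a ^ r + b ^ r := by
        rcases max_choice a b with h | h <;> rw [h]
        · exact le_add_of_nonneg_right (rpow_nonneg hb r)
        · exact le_add_of_nonneg_left (rpow_nonneg ha r)

theorem abs_deriv_energy_le {p q K a b c : ℝ} (hpq : p.HolderConjugate q) (hK : 0 ≤ K)
    (hc : |c| ≤ K * |a| ^ (p - 1)) :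
    |p * signedRpow p a * b + q * signedRpow q (signedRpow p b) * c|
      ≤ (p + q * K) * (|a| ^ p + |signedRpow p b| ^ q) := by
  have hp := hpq.pos
  have hq := hpq.symm.pos
  have young := rpow_sub_one_mul_le_rpow_add_rpow hpq.lt (abs_nonneg a) (abs_nonneg b)
  rw [abs_signedRpow_rpow_conj hpq]
  calc _ ≤ p * (|a| ^ (p - 1) * |b|) + q * (|b| * |c|) := by
        refine (abs_add_le _ _).trans_eq ?_
        simp only [abs_mul, abs_signedRpow hpq.lt.ne', abs_signedRpow_signedRpow_conj hpq,
          abs_of_pos hp, abs_of_pos hq]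
        ring
    _ ≤ p * (|a| ^ (p - 1) * |b|) + q * (|b| * (K * |a| ^ (p - 1))) := by gcongr
    _ = (p + q * K) * (|a| ^ (p - 1) * |b|) := by ring
    _ ≤ (p + q * K) * (|a| ^ p + |b| ^ p) := by gcongr

theorem abs_le_of_neg_add_mul_signedRpow_eq {p w a k l g Q B C : ℝ} (hp : p ≠ 1)
    (heq : -w + k * signedRpow p a = l * signedRpow p a + g) (hk : |k| ≤ Q) (hl : |l| ≤ B)
    (hg : |g| ≤ C * |a| ^ (p - 1)) :
    |w| ≤ (Q + B + C) * |a| ^ (p - 1) := by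
  rw [show w = (k - l) * signedRpow p a - g by linear_combination -heq]
  calc _ ≤ |k - l| * |signedRpow p a| + |g| := by
        rw [← abs_mul]; exact abs_sub _ _
    _ ≤ (Q + B) * |a| ^ (p - 1) + C * |a| ^ (p - 1) := by
        rw [abs_signedRpow hp]
        gcongr
        exact (abs_sub _ _).trans (add_le_add hk hl)
    _ = (Q + B + C) * |a| ^ (p - 1) := by ring

theorem HasDerivAt.abs_rpow {f : ℝ → ℝ} {f' x p : ℝ} (hp : 1 < p) (hf : HasDerivAt f f' x) :
    HasDerivAt (fun y => |f y| ^ p) (p * signedRpow p (f x) * f') x :=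
  ((hasDerivAt_abs_rpow (f x) hp).comp x hf).congr_deriv (by rw [signedRpow]; ring)

section Gronwall

variable {F : Type*} [NormedAddCommGroup F] [NormedSpace ℝ F]

theorem eq_zero_of_norm_deriv_le_mul_norm_self_of_eq_zero_right_of_Ioo {f f' : ℝ → F}
    {K a b : ℝ} (hf : ContinuousOn f (Icc a b)) (hf' : ∀ x ∈ Ioo a b, HasDerivAt f (f' x) x)
    (ha : f a = 0) (bound : ∀ x ∈ Ioo a b, ‖f' x‖ ≤ K * ‖f x‖) :
    ∀ x ∈ Icc a b, f x = 0 := by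
  rintro x ⟨hax, hxb⟩
  rcases hax.eq_or_lt with rfl | hax
  · exact ha
  have gronwall_from : ∀ s ∈ Ioo a x, ‖f x‖ ≤ ‖f s‖ * exp (K * (x - s)) := by
    intro s hs
    have hsub : Icc s x ⊆ Icc a b := Icc_subset_Icc hs.1.le hxb
    have hsub' : Ico s x ⊆ Ioo a b := fun y hy => ⟨hs.1.trans_le hy.1, hy.2.trans_le hxb⟩
    simpa only [gronwallBound_ε0] using norm_le_gronwallBound_of_norm_deriv_right_le
      (K := K) (ε := 0) (hf.mono hsub) (fun y hy => (hf' y (hsub' hy)).hasDerivWithinAt) le_rfl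
      (fun y hy => (add_zero (K * ‖f y‖)).symm ▸ bound y (hsub' hy)) x ⟨hs.2.le, le_rfl⟩
  have hlim : Tendsto (fun s => ‖f s‖ * exp (K * (x - s))) (𝓝[>] a) (𝓝 0) := by
    have hfa : Tendsto f (𝓝[>] a) (𝓝 0) := ha ▸
      ((hf a ⟨le_rfl, hax.le.trans hxb⟩).mono_of_mem_nhdsWithin
        (Icc_mem_nhdsGT (hax.trans_le hxb))).tendsto
    simpa using hfa.norm.mul
      ((continuous_exp.comp (by fun_prop)).tendsto a |>.mono_left nhdsWithin_le_nhds)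
  exact norm_le_zero_iff.mp <| ge_of_tendsto hlim <|
    eventually_of_mem (Ioo_mem_nhdsGT hax) gronwall_from

theorem eq_zero_of_norm_deriv_le_mul_norm_self_of_eq_zero {f f' : ℝ → F} {K a b c : ℝ}
    (hf : ContinuousOn f (Icc a b)) (hf' : ∀ x ∈ Ioo a b, HasDerivAt f (f' x) x)
    (bound : ∀ x ∈ Ioo a b, ‖f' x‖ ≤ K * ‖f x‖) (hc : c ∈ Icc a b) (hfc : f c = 0) :
    ∀ x ∈ Icc a b, f x = 0 := by
  intro x hx
  rcases le_total c x with hcx | hxc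
  · exact eq_zero_of_norm_deriv_le_mul_norm_self_of_eq_zero_right_of_Ioo
      (hf.mono (Icc_subset_Icc_left hc.1)) (fun y hy => hf' y ⟨hc.1.trans_lt hy.1, hy.2⟩) hfc
      (fun y hy => bound y ⟨hc.1.trans_lt hy.1, hy.2⟩) x ⟨hcx, hx.2⟩
  · have hmaps : MapsTo (fun t => a + c - t) (Icc a c) (Icc a b) := fun t ht =>
      ⟨by linarith [ht.2], by linarith [ht.1, hc.2]⟩
    have hmaps' : MapsTo (fun t => a + c - t) (Ioo a c) (Ioo a b) := fun t ht =>
      ⟨by linarith [ht.2], by linarith [ht.1, hc.2]⟩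
    have := eq_zero_of_norm_deriv_le_mul_norm_self_of_eq_zero_right_of_Ioo
      (f := fun t => f (a + c - t)) (f' := fun t => -f' (a + c - t)) (K := K) (b := c)
      (hf.comp (by fun_prop) hmaps) (fun t ht => (hf' _ (hmaps' ht)).comp_const_sub (a + c) t)
      (by simpa using hfc) (fun t ht => by simpa using bound _ (hmaps' ht))
      (a + c - x) ⟨by linarith, by linarith [hx.1]⟩
    simpa using this

end Gronwall

theorem eq_zero_of_abs_deriv_signedRpow_le {p K a b x₀ : ℝ} {u u' w' : ℝ → ℝ} (hp : 1 < p)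
    (hK : 0 ≤ K) (hu : ∀ x ∈ Icc a b, HasDerivAt u (u' x) x) (hu' : ContinuousOn u' (Icc a b))
    (hw : ∀ x ∈ Ioo a b, HasDerivAt (fun y => signedRpow p (u' y)) (w' x) x)
    (hw'_le : ∀ x ∈ Ioo a b, |w' x| ≤ K * |u x| ^ (p - 1))
    (hx₀ : x₀ ∈ Icc a b) (hu0 : u x₀ = 0) (hu'0 : u' x₀ = 0) :
    ∀ x ∈ Icc a b, u x = 0 := by
  have hpr := Real.HolderConjugate.conjExponent hp
  set r := p.conjExponent
  set E := fun x => |u x| ^ p + |u' x| ^ p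
  have hE : E = fun x => |u x| ^ p + |signedRpow p (u' x)| ^ r := by
    simp only [E, abs_signedRpow_rpow_conj hpr]
  have hE_cont : ContinuousOn E (Icc a b) :=
    have hu_cont : ContinuousOn u (Icc a b) := fun x hx =>
      (hu x hx).continuousAt.continuousWithinAt
    (hu_cont.abs.rpow_const fun _ _ => Or.inr hpr.pos.le).add
      (hu'.abs.rpow_const fun _ _ => Or.inr hpr.pos.le)
  have hE_deriv : ∀ x ∈ Ioo a b, HasDerivAt E
      (p * signedRpow p (u x) * u' x + r * signedRpow r (signedRpow p (u' x)) * w' x) x :=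
    fun x hx => hE ▸
      ((hu x (Ioo_subset_Icc_self hx)).abs_rpow hp).add ((hw x hx).abs_rpow hpr.symm.lt)
  have hE_zero := eq_zero_of_norm_deriv_le_mul_norm_self_of_eq_zero hE_cont hE_deriv
    (fun x hx => by
      rw [Real.norm_eq_abs, Real.norm_eq_abs, abs_of_nonneg (by positivity : 0 ≤ E x), hE]
      exact abs_deriv_energy_le hpr hK (hw'_le x hx))
    hx₀ (by simp [E, hu0, hu'0, zero_rpow hpr.pos.ne'])
  intro x hx
  have hux := ((add_eq_zero_iff_of_nonneg (by positivity) (by positivity)).1 (hE_zero x hx)).1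
  exact abs_eq_zero.1 ((rpow_eq_zero (abs_nonneg _) hpr.pos.ne').1 hux)

theorem double_zero_implies_trivial_general
    (T p lam M C : ℝ) (hp : 1 < p) (hC : 0 ≤ C)
    (q m : ℝ → ℝ) (hq : ContinuousOn q (Icc 0 T))
    (hm : ContinuousOn m (Icc 0 T))
    (g : ℝ → ℝ → ℝ → ℝ)
    (u u' w' : ℝ → ℝ)
    (hu : ∀ x ∈ Icc 0 T, HasDerivAt u (u' x) x)
    (hu' : ContinuousOn u' (Icc 0 T))
    (hw : ∀ x ∈ Ioo 0 T, HasDerivAt (fun y => |u' y| ^ (p - 2) * u' y) (w' x) x)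
    (heq : ∀ x ∈ Ioo 0 T,
        -(w' x) + q x * (|u x| ^ (p - 2) * u x)
          = lam * m x * (|u x| ^ (p - 2) * u x) + g x (u x) lam)
    (hM : ∀ x ∈ Icc 0 T, |u x| ≤ M)
    (hg : ∀ x ∈ Icc 0 T, ∀ s : ℝ, |s| ≤ M → |g x s lam| ≤ C * |s| ^ (p - 1))
    (x₀ : ℝ) (hx₀ : x₀ ∈ Icc 0 T) (hu0 : u x₀ = 0) (hu'0 : u' x₀ = 0) :
    ∀ x ∈ Icc 0 T, u x = 0 := by
  obtain ⟨Q, hQ⟩ := isCompact_Icc.exists_bound_of_continuousOn hq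
  obtain ⟨B, hB⟩ := isCompact_Icc.exists_bound_of_continuousOn hm
  set K := Q + |lam| * B + C
  have hK : 0 ≤ K := by
    have := (norm_nonneg _).trans (hQ x₀ hx₀); have := (norm_nonneg _).trans (hB x₀ hx₀)
    positivity
  have hw'_le : ∀ x ∈ Ioo 0 T, |w' x| ≤ K * |u x| ^ (p - 1) := fun x hx =>
    have hxI := Ioo_subset_Icc_self hx
    abs_le_of_neg_add_mul_signedRpow_eq hp.ne' (heq x hx) (hQ x hxI)
      ((abs_mul _ _).trans_le (mul_le_mul_of_nonneg_left (hB x hxI) (abs_nonneg lam)))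
      (hg x hxI _ (hM x hxI))
  exact eq_zero_of_abs_deriv_signedRpow_le hp hK hu hu' hw hw'_le hx₀ hu0 hu'0

theorem double_zero_implies_trivial
    (T p lam M C : ℝ) (hT : 0 < T) (hp : 1 < p) (hC : 0 ≤ C)
    (q m : ℝ → ℝ) (hq : ContinuousOn q (Icc 0 T)) (hq0 : ∀ x ∈ Icc 0 T, 0 ≤ q x)
    (hm : ContinuousOn m (Icc 0 T))
    (g : ℝ → ℝ → ℝ → ℝ)
    (u u' w' : ℝ → ℝ)
    (hu : ∀ x ∈ Icc 0 T, HasDerivAt u (u' x) x)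
    (hu' : ContinuousOn u' (Icc 0 T))
    (hw : ∀ x ∈ Ioo 0 T, HasDerivAt (fun y => |u' y| ^ (p - 2) * u' y) (w' x) x)
    (heq : ∀ x ∈ Ioo 0 T,
        -(w' x) + q x * (|u x| ^ (p - 2) * u x)
          = lam * m x * (|u x| ^ (p - 2) * u x) + g x (u x) lam)
    (hM : ∀ x ∈ Icc 0 T, |u x| ≤ M)
    (hg : ∀ x ∈ Icc 0 T, ∀ s : ℝ, |s| ≤ M → |g x s lam| ≤ C * |s| ^ (p - 1))
    (x₀ : ℝ) (hx₀ : x₀ ∈ Icc 0 T) (hu0 : u x₀ = 0) (hu'0 : u' x₀ = 0) :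
    ∀ x ∈ Icc 0 T, u x = 0 :=
  double_zero_implies_trivial_general T p lam M C hp hC q m hq hm g u u' w' hu hu' hw heq hM hg x₀
    hx₀ hu0 hu'0
end
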